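/- Let T be the 18-dimensional real vector space of triples B = (B¹, B², B³) of antisymmetric real 4×4 matrices, and define the linear operator J₂ : T → T by J₂(B)ⁱ := (1/2) ∑_{j,k} ε^{ijk} (Sʲ Bᵏ − Bᵏ Sʲ). Then J₂ satisfies the polynomial identity J₂⁴ − 2 J₂³ − J₂² + 2 J₂ = 0, i.e. J₂ ∘ (J₂ − 2·id) ∘ (J₂ − id) ∘ (J₂ + id) = 0. -/

import Mathlib

open Matrix BigOperators

/-- Levi-Civita symbol on three indices, `ε 0 1 2 = 1`. -/
noncomputable def eps3 (i j k : Fin 3) : ℝ :=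
  Matrix.det (Matrix.of fun a b => if ![i, j, k] a = b then (1 : ℝ) else 0)

/-- The canonical matrices `S¹, S², S³`. -/
def Scan : Fin 3 → Matrix (Fin 4) (Fin 4) ℝ :=
  ![!![0, 0, 0, -1; 0, 0, -1, 0; 0, 1, 0, 0; 1, 0, 0, 0],
    !![0, 0, 1, 0; 0, 0, 0, -1; -1, 0, 0, 0; 0, 1, 0, 0],
    !![0, -1, 0, 0; 1, 0, 0, 0; 0, 0, 0, -1; 0, 0, 1, 0]]

/-- The operator `J₂` on triples of (antisymmetric) 4×4 matrices:
`J₂(B)ⁱ = (1/2) ∑_{jk} ε^{ijk} (Sʲ Bᵏ − Bᵏ Sʲ)`, the coordinate form of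
`J₂(B)ⁱ_{μν} = ε^{ijk} Σʲ_{[μ}{}^α Bᵏ_{|α|ν]}`. -/
noncomputable def J2 (B : Fin 3 → Matrix (Fin 4) (Fin 4) ℝ) :
    Fin 3 → Matrix (Fin 4) (Fin 4) ℝ :=
  fun i => (1 / 2 : ℝ) • ∑ j, ∑ k, eps3 i j k • (Scan j * B k - B k * Scan j)

/-!
The matrices `Sʲ` satisfy `[Sʲ, Sˡ] = 2 ε^{jlm} Sᵐ`, so they span one `su(2)` factor of
`so(4) = su(2) ⊕ su(2)`, and every antisymmetric matrix is `∑ₗ bₗ Sˡ` plus a matrix commuting with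
all `Sʲ`. Hence `J₂` kills the commuting part of a triple and, by `ε^{ijk} ε^{jlm} = δ_{kl} δ_{im} -
δ_{km} δ_{il}`, acts on the coefficient matrix `b` as `b ↦ tr b • 1 - bᵀ`. On `3 × 3` matrices this
map has eigenvalue `2` on scalars, `1` on antisymmetric and `-1` on traceless symmetric matrices.
-/

section TraceSubTranspose

variable {n R : Type*} [Fintype n] [DecidableEq n] [CommRing R]

def traceSubTranspose (b : Matrix n n R) : Matrix n n R :=
  trace b • 1 - bᵀ

lemma trace_traceSubTranspose (b : Matrix n n R) :
    trace (traceSubTranspose b) = (Fintype.card n - 1) * trace b := by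
  simp only [traceSubTranspose, trace_sub, trace_smul, trace_one, smul_eq_mul, trace_transpose]
  ring

lemma traceSubTranspose_traceSubTranspose (b : Matrix n n R) :
    traceSubTranspose (traceSubTranspose b) = b + ((Fintype.card n - 2) * trace b) • 1 := by
  rw [traceSubTranspose, trace_traceSubTranspose, traceSubTranspose]
  simp only [transpose_sub, transpose_smul, transpose_one, transpose_transpose]
  module

lemma traceSubTranspose_cubic (b : Matrix n n R) :
    traceSubTranspose (traceSubTranspose (traceSubTranspose b))
      - (Fintype.card n - 1 : R) • traceSubTranspose (traceSubTranspose b)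
      - traceSubTranspose b + (Fintype.card n - 1 : R) • b = 0 := by
  rw [traceSubTranspose_traceSubTranspose, traceSubTranspose_traceSubTranspose,
    trace_traceSubTranspose]
  module

end TraceSubTranspose

lemma eps3_eq : eps3 = ![![![0, 0, 0], ![0, 0, 1], ![0, -1, 0]],
    ![![0, 0, -1], ![0, 0, 0], ![1, 0, 0]], ![![0, 1, 0], ![-1, 0, 0], ![0, 0, 0]]] := by
  ext i j k
  fin_cases i <;> fin_cases j <;> fin_cases k <;> simp [eps3, det_fin_three]

section EpsBracket

variable {A : Type*} [Ring A] [Algebra ℝ A]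

noncomputable def epsBracket (S B : Fin 3 → A) : Fin 3 → A :=
  fun i => (1 / 2 : ℝ) • ∑ j, ∑ k, eps3 i j k • (S j * B k - B k * S j)

def tripleCombination (S : Fin 3 → A) : Matrix (Fin 3) (Fin 3) ℝ →ₗ[ℝ] Fin 3 → A where
  toFun b i := ∑ m, b i m • S m
  map_add' b c := by ext i; simp [add_smul, Finset.sum_add_distrib]
  map_smul' r b := by ext i; simp [Finset.smul_sum, smul_smul]

lemma epsBracket_tripleCombination {S : Fin 3 → A}
    (hS : ∀ j l, S j * S l - S l * S j = (2 : ℝ) • ∑ m, eps3 j l m • S m)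
    (b : Matrix (Fin 3) (Fin 3) ℝ) :
    epsBracket S (tripleCombination S b) = tripleCombination S (traceSubTranspose b) := by
  have hbracket (j k : Fin 3) : S j * ∑ l, b k l • S l - (∑ l, b k l • S l) * S j
      = ∑ l, b k l • (2 : ℝ) • ∑ m, eps3 j l m • S m := by
    simp only [Finset.mul_sum, Finset.sum_mul, mul_smul_comm, smul_mul_assoc,
      ← Finset.sum_sub_distrib, ← smul_sub, hS]
  funext i
  simp only [epsBracket, tripleCombination, LinearMap.coe_mk, AddHom.coe_mk, hbracket]
  simp only [traceSubTranspose, Matrix.sub_apply, Matrix.smul_apply, transpose_apply, one_apply,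
    trace_fin_three, eps3_eq, Fin.sum_univ_three]
  fin_cases i <;>
    simp only [Fin.isValue, Fin.zero_eta, Fin.mk_one, Fin.reduceFinMk, Fin.reduceEq, cons_val',
      cons_val_zero, cons_val_one, cons_val, cons_val_fin_one, ↓reduceIte] <;>
    module

lemma epsBracket_add_of_commute {S B C : Fin 3 → A} (hC : ∀ j k, Commute (S j) (C k)) :
    epsBracket S (B + C) = epsBracket S B := by
  funext i
  simp only [epsBracket, Pi.add_apply, mul_add, add_mul, (hC _ _).eq]
  congr! 4
  abel

end EpsBracket

lemma Scan_mul_sub_mul (j l : Fin 3) :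
    Scan j * Scan l - Scan l * Scan j = (2 : ℝ) • ∑ m, eps3 j l m • Scan m := by
  fin_cases j <;> fin_cases l <;>
    simp [Fin.sum_univ_three, eps3_eq, Scan, ← Matrix.zero_empty, one_add_one_eq_two, ← neg_add']

lemma exists_eq_of_transpose_eq_neg {R : Type*} [AddGroup R] [IsAddTorsionFree R]
    {A : Matrix (Fin 4) (Fin 4) R} (hA : Aᵀ = -A) :
    ∃ a b c d e f : R, A = !![0, a, b, c; -a, 0, d, e; -b, -d, 0, f; -c, -e, -f, 0] := by
  have h (μ ν : Fin 4) : A ν μ = -A μ ν := congrFun (congrFun hA μ) ν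
  have hdiag (μ : Fin 4) : A μ μ = 0 := self_eq_neg.mp (h μ μ)
  refine ⟨A 0 1, A 0 2, A 0 3, A 1 2, A 1 3, A 2 3, ?_⟩
  ext μ ν
  fin_cases μ <;> fin_cases ν <;> simp [hdiag, h 0 1, h 0 2, h 0 3, h 1 2, h 1 3, h 2 3]

/-- The coefficient of `Scan l` in `A`: the `Scan l` anticommute pairwise and square to `-1`. -/
noncomputable def scanCoord (A : Matrix (Fin 4) (Fin 4) ℝ) (l : Fin 3) : ℝ :=
  -(1 / 4) * trace (Scan l * A)

lemma commute_Scan_sub_sum_scanCoord {A : Matrix (Fin 4) (Fin 4) ℝ} (hA : Aᵀ = -A)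
    (j : Fin 3) : Commute (Scan j) (A - ∑ l, scanCoord A l • Scan l) := by
  obtain ⟨a, b, c, d, e, f, rfl⟩ := exists_eq_of_transpose_eq_neg hA
  fin_cases j <;>
    simp [Commute, SemiconjBy, scanCoord, Scan, Fin.sum_univ_three, trace, Fin.sum_univ_four,
      ← Matrix.zero_empty] <;>
    constructorm* _ ∧ _ <;> ring

lemma J2_tripleCombination (b : Matrix (Fin 3) (Fin 3) ℝ) :
    J2 (tripleCombination Scan b) = tripleCombination Scan (traceSubTranspose b) :=
  epsBracket_tripleCombination Scan_mul_sub_mul b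

lemma J2_eq_tripleCombination {B : Fin 3 → Matrix (Fin 4) (Fin 4) ℝ}
    (hanti : ∀ i, (B i)ᵀ = -B i) :
    J2 B = tripleCombination Scan (traceSubTranspose (of fun k l => scanCoord (B k) l)) := by
  set b : Matrix (Fin 3) (Fin 3) ℝ := of fun k l => scanCoord (B k) l
  have hB : B = tripleCombination Scan b + fun k => B k - ∑ l, scanCoord (B k) l • Scan l := by
    funext k
    simp [tripleCombination, b]
  calc J2 B = J2 (tripleCombination Scan b + _) := congrArg J2 hB
    _ = J2 (tripleCombination Scan b) :=
      epsBracket_add_of_commute fun j k => commute_Scan_sub_sum_scanCoord (hanti k) j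
    _ = _ := J2_tripleCombination b

/-- on antisymmetric triples, `J₂` satisfies the polynomial
identity `J₂⁴ − 2J₂³ − J₂² + 2J₂ = 0`, i.e. `J₂(J₂−2)(J₂−1)(J₂+1) = 0`. -/
theorem J2_polynomial_identity
    (B : Fin 3 → Matrix (Fin 4) (Fin 4) ℝ)
    (hanti : ∀ i, (B i)ᵀ = -B i) :
    J2 (J2 (J2 (J2 B))) - (2 : ℝ) • J2 (J2 (J2 B)) - J2 (J2 B) + (2 : ℝ) • J2 B
      = 0 := by
  have hcubic := traceSubTranspose_cubic (traceSubTranspose (of fun k l => scanCoord (B k) l))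
  norm_num at hcubic
  rw [J2_eq_tripleCombination hanti, J2_tripleCombination, J2_tripleCombination,
    J2_tripleCombination, ← map_smul, ← map_smul, ← map_sub, ← map_sub, ← map_add, hcubic,
    map_zero]
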